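/- arXiv:2304.08605 — 4 statements merged into one kernel-verified Lean document; each statement's English description precedes it below -/
import Mathlib

section
/- Let X_1, …, X_n (n ≥ 2) be i.i.d. random elements, let h be a symmetric measurable kernel of two arguments, set m = ⌊n/2⌋, and let U_n = C(n,2)^{-1} Σ_{1 ≤ i < j ≤ n} h(X_i, X_j). Then for any γ > 0 with E[exp(γ h(X_1, X_2)/m)] < ∞, E[exp(γ U_n)] ≤ ( E[exp(γ h(X_1, X_2)/m)] )^m. -/
/-!
Hoeffding's representation: averaged over all permutations `σ` of `Fin n`, the mean
`m⁻¹ ∑ₖ h(X_{σ(2k)}, X_{σ(2k+1)})` of the kernel over `m = ⌊n/2⌋` disjoint pairs is the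
U-statistic, because every pair of distinct indices is hit equally often. Jensen's inequality
for `exp` moves this average over `σ` outside the exponential, and for fixed `σ` the pairs
are disjoint, so `exp (γ/m ∑ₖ h(…))` is a product of `m` independent copies of
`exp (γ h(X₁, X₂)/m)`.
-/

open MeasureTheory ProbabilityTheory Finset
open scoped BigOperators

section

variable {ι : Type*} [Fintype ι] [LinearOrder ι] {M : Type*} [AddCommMonoid M]

theorem sum_sum_ite_ne_eq_two_nsmul {G : ι → ι → M} (hG : ∀ i j, G i j = G j i) :
    ∑ i, ∑ j, (if i ≠ j then G i j else 0) = 2 • ∑ i, ∑ j, if i < j then G i j else 0 := by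
  have hsplit : ∀ i j, (if i ≠ j then G i j else 0) =
      (if i < j then G i j else 0) + if j < i then G j i else 0 := by
    intro i j
    rcases lt_trichotomy i j with hij | rfl | hji
    · simp [hij.ne, hij.not_gt, hij.not_ge]
    · simp
    · simp [hji.ne', hji.not_gt, hji, hG i j]
  simp only [hsplit, sum_add_distrib, two_nsmul]
  rw [sum_comm (f := fun i j => if j < i then G j i else 0)]

theorem sum_sum_ite_lt_const (c : M) :
    ∑ i : ι, ∑ j : ι, (if i < j then c else 0) = (Fintype.card ι).choose 2 • c := by
  rw [← card_univ, ← card_product_filter_lt, ← sum_const, sum_filter, sum_product]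

end

section

variable {ι : Type*} [Fintype ι] [DecidableEq ι] {M : Type*} [AddCommMonoid M]

theorem sum_perm_apply_apply_eq (F : ι → ι → M) {a b a' b' : ι} (hab : a ≠ b)
    (hab' : a' ≠ b') :
    ∑ σ : Equiv.Perm ι, F (σ a) (σ b) = ∑ σ : Equiv.Perm ι, F (σ a') (σ b') := by
  obtain ⟨τ, hτa, hτb⟩ := MulAction.is_two_pretransitive_iff.mp
    (Equiv.Perm.isMultiplyPretransitive ι 2) hab' hab
  exact Fintype.sum_equiv (Equiv.mulRight τ) _ _ fun σ => by
    simp [Equiv.Perm.mul_apply, ← hτa, ← hτb, Equiv.Perm.smul_def]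

theorem sum_sum_ite_ne_sum_perm_eq_factorial_nsmul (F : ι → ι → M) :
    ∑ i, ∑ j, (if i ≠ j then ∑ σ : Equiv.Perm ι, F (σ i) (σ j) else 0) =
      (Fintype.card ι).factorial • ∑ i, ∑ j, if i ≠ j then F i j else 0 := by
  have hperm : ∀ σ : Equiv.Perm ι,
      ∑ i, ∑ j, (if i ≠ j then F (σ i) (σ j) else 0) = ∑ i, ∑ j, if i ≠ j then F i j else 0 :=
    fun σ => Fintype.sum_equiv σ _ _ fun i => Fintype.sum_equiv σ _ _ fun j => by
      simp [σ.injective.ne_iff]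
  calc ∑ i, ∑ j, (if i ≠ j then ∑ σ : Equiv.Perm ι, F (σ i) (σ j) else 0)
      = ∑ σ : Equiv.Perm ι, ∑ i, ∑ j, (if i ≠ j then F (σ i) (σ j) else 0) := by
        simp only [ite_sum_zero]
        exact (sum_congr rfl fun _ _ => sum_comm).trans sum_comm
    _ = _ := by rw [sum_congr rfl fun σ _ => hperm σ, sum_const, card_univ, Fintype.card_perm]

end

section

variable {ι : Type*} [Fintype ι] [LinearOrder ι] {K : Type*} [Field K] [CharZero K]
  {F : ι → ι → K}

theorem expect_perm_apply_apply (hF : ∀ i j, F i j = F j i) {a b : ι} (hab : a ≠ b) :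
    𝔼 σ : Equiv.Perm ι, F (σ a) (σ b) =
      ((Fintype.card ι).choose 2 : K)⁻¹ * ∑ i, ∑ j, if i < j then F i j else 0 := by
  -- double counting of `∑_{i ≠ j} ∑_σ F (σ i) (σ j)`
  set G : ι → ι → K := fun i j => ∑ σ : Equiv.Perm ι, F (σ i) (σ j)
  have hG : ∀ i j, G i j = G j i := fun i j => sum_congr rfl fun σ _ => hF _ _
  have hcount : (Fintype.card ι).choose 2 • G a b = ∑ i, ∑ j, if i < j then G i j else 0 := by
    rw [← sum_sum_ite_lt_const]
    refine sum_congr rfl fun i _ => sum_congr rfl fun j _ => ?_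
    split_ifs with hij
    · exact sum_perm_apply_apply_eq F hab hij.ne
    · rfl
  have hdouble := sum_sum_ite_ne_sum_perm_eq_factorial_nsmul F
  rw [sum_sum_ite_ne_eq_two_nsmul hF, sum_sum_ite_ne_eq_two_nsmul hG, ← hcount] at hdouble
  have hchoose : ((Fintype.card ι).choose 2 : K) ≠ 0 := by
    have : 1 < Fintype.card ι := Fintype.one_lt_card_iff.mpr ⟨a, b, hab⟩
    exact_mod_cast (Nat.choose_pos this).ne'
  have hfactorial : ((Fintype.card ι).factorial : K) ≠ 0 :=
    Nat.cast_ne_zero.mpr (Nat.factorial_ne_zero _)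
  rw [expect_eq_sum_div_card, card_univ, Fintype.card_perm]
  simp only [nsmul_eq_mul, Nat.cast_ofNat] at hdouble
  field_simp
  linear_combination hdouble / 2

theorem expect_perm_mean_pairs (hF : ∀ i j, F i j = F j i) {κ : Type*} [Fintype κ]
    [Nonempty κ] {e : κ × Fin 2 → ι} (he : Function.Injective e) :
    𝔼 σ : Equiv.Perm ι, (Fintype.card κ : K)⁻¹ * ∑ k, F (σ (e (k, 0))) (σ (e (k, 1))) =
      ((Fintype.card ι).choose 2 : K)⁻¹ * ∑ i, ∑ j, if i < j then F i j else 0 := by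
  have hpair : ∀ k, e (k, 0) ≠ e (k, 1) := fun k => he.ne (by simp)
  rw [← mul_expect, expect_sum_comm]
  simp only [expect_perm_apply_apply hF (hpair _), sum_const, card_univ, nsmul_eq_mul]
  field_simp

end

/-- `(k, i) ↦ 2k + i`. -/
def finPairs (n : ℕ) : Fin (n / 2) × Fin 2 ↪ Fin n :=
  finProdFinEquiv.toEmbedding.trans (Fin.castLEEmb (Nat.div_mul_le_self n 2))

theorem choose_two_inv_mul_sum_lt_eq_expect_perm {K : Type*} [Field K] [CharZero K] {n : ℕ}
    {F : Fin n → Fin n → K} (hF : ∀ i j, F i j = F j i) :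
    (n.choose 2 : K)⁻¹ * ∑ i, ∑ j, (if i < j then F i j else 0) =
      𝔼 σ : Equiv.Perm (Fin n),
        ((n / 2 : ℕ) : K)⁻¹ * ∑ k, F (σ (finPairs n (k, 0))) (σ (finPairs n (k, 1))) := by
  rcases Nat.eq_zero_or_pos (n / 2) with hm | hm
  · have : n.choose 2 = 0 := Nat.choose_eq_zero_of_lt (by omega)
    simp [this, hm]
  · have : Nonempty (Fin (n / 2)) := ⟨⟨0, hm⟩⟩
    simpa using (expect_perm_mean_pairs hF (finPairs n).injective).symm

theorem ConvexOn.map_expect_le {ι : Type*} {s : Finset ι} {t : Set ℝ} {g : ℝ → ℝ}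
    (hg : ConvexOn ℝ t g) (hs : s.Nonempty) {f : ι → ℝ} (hf : ∀ i ∈ s, f i ∈ t) :
    g (𝔼 i ∈ s, f i) ≤ 𝔼 i ∈ s, g (f i) := by
  have hcard : (0 : ℝ) < #s := by exact_mod_cast hs.card_pos
  have := hg.map_sum_le (w := fun _ => (#s : ℝ)⁻¹) (fun _ _ => by positivity)
    (by simp [hcard.ne']) hf
  simpa [expect_eq_sum_div_card, ← mul_sum, div_eq_inv_mul] using this

section

variable {X ι : Type*} [MeasurableSpace X] {μ : Measure X} {s : Finset ι} {f : ι → X → ℝ}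

theorem integrable_expect (hf : ∀ i ∈ s, Integrable (f i) μ) :
    Integrable (fun x => 𝔼 i ∈ s, f i x) μ := by
  simp_rw [expect_eq_sum_div_card]
  exact (integrable_finsetSum s hf).div_const _

theorem integral_expect (hf : ∀ i ∈ s, Integrable (f i) μ) :
    ∫ x, 𝔼 i ∈ s, f i x ∂μ = 𝔼 i ∈ s, ∫ x, f i x ∂μ := by
  simp_rw [expect_eq_sum_div_card]
  rw [integral_div, integral_finsetSum s hf]

end

section

variable {α : Type*} [MeasurableSpace α] (ν : Measure α) [IsProbabilityMeasure ν]
  {ι κ : Type*} [Fintype ι] [Fintype κ]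

theorem measurePreserving_comp_of_injective {e : ι → κ} (he : Function.Injective e) :
    MeasurePreserving (fun x : κ → α => x ∘ e)
      (Measure.pi fun _ => ν) (Measure.pi fun _ => ν) := by
  have hindep : iIndepFun (fun i (x : κ → α) => x (e i)) (Measure.pi fun _ => ν) :=
    (iIndepFun_pi (X := fun _ => id) fun _ => aemeasurable_id).precomp he
  refine ⟨by fun_prop, ?_⟩
  rw [show (fun x : κ → α => x ∘ e) = fun x i => x (e i) from rfl,
    hindep.map_fun_eq_pi_map fun i => (measurable_pi_apply (e i)).aemeasurable]
  congr with i : 1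
  exact (measurePreserving_eval (fun _ => ν) (e i)).map_eq

theorem measurePreserving_pairs {e : ι × Fin 2 → κ} (he : Function.Injective e) :
    MeasurePreserving (fun (x : κ → α) k => (x (e (k, 0)), x (e (k, 1))))
      (Measure.pi fun _ => ν) (Measure.pi fun _ => ν.prod ν) := by
  have hcurry : MeasurePreserving (MeasurableEquiv.curry ι (Fin 2) α)
      (Measure.pi fun _ => ν) (Measure.pi fun _ => Measure.pi fun _ => ν) :=
    ⟨by fun_prop, by simpa only [Measure.infinitePi_eq_pi] using
      Measure.infinitePi_map_curry (fun (_ : ι) (_ : Fin 2) => ν)⟩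
  exact (measurePreserving_pi _ _ fun _ => measurePreserving_finTwoArrow ν).comp
    (hcurry.comp (measurePreserving_comp_of_injective ν he))

theorem integrable_prod_pairs {e : ι × Fin 2 → κ} (he : Function.Injective e)
    {g : α × α → ℝ} (hg : Integrable g (ν.prod ν)) :
    Integrable (fun x : κ → α => ∏ k, g (x (e (k, 0)), x (e (k, 1))))
      (Measure.pi fun _ => ν) :=
  (measurePreserving_pairs ν he).integrable_comp_of_integrable
    (g := fun y : ι → α × α => ∏ k, g (y k)) (Integrable.fintype_prod fun _ => hg)

theorem integral_prod_pairs {e : ι × Fin 2 → κ} (he : Function.Injective e)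
    {g : α × α → ℝ} (hg : Integrable g (ν.prod ν)) :
    ∫ x : κ → α, ∏ k, g (x (e (k, 0)), x (e (k, 1))) ∂(Measure.pi fun _ => ν) =
      (∫ p, g p ∂(ν.prod ν)) ^ Fintype.card ι := by
  have hpairs := measurePreserving_pairs ν he
  have hprod : Integrable (fun y : ι → α × α => ∏ k, g (y k)) (Measure.pi fun _ => ν.prod ν) :=
    Integrable.fintype_prod fun _ => hg
  rw [← integral_fintype_prod_eq_pow, ← hpairs.map_eq,
    integral_map hpairs.aemeasurable (hpairs.map_eq ▸ hprod.aestronglyMeasurable)]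

end

theorem ustatistic_mgf_bound_general {α : Type*} [MeasurableSpace α]
    (ν : Measure α) [IsProbabilityMeasure ν] (n : ℕ)
    (h : α → α → ℝ)
    (hsymm : ∀ x y, h x y = h y x) (γ : ℝ)
    (hint : Integrable (fun p : α × α =>
      Real.exp (γ * h p.1 p.2 / (↑(n / 2) : ℝ))) (ν.prod ν)) :
    ∫ x : Fin n → α,
        Real.exp (γ * ((n.choose 2 : ℝ)⁻¹ *
          ∑ i : Fin n, ∑ j : Fin n, if i < j then h (x i) (x j) else 0))
        ∂(Measure.pi fun _ : Fin n => ν) ≤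
      (∫ p : α × α, Real.exp (γ * h p.1 p.2 / (↑(n / 2) : ℝ)) ∂(ν.prod ν)) ^ (n / 2) := by
  set f : α × α → ℝ := fun p => Real.exp (γ * h p.1 p.2 / (n / 2 : ℕ))
  set P : Equiv.Perm (Fin n) → (Fin n → α) → ℝ := fun σ x =>
    ∏ k, f (x (σ (finPairs n (k, 0))), x (σ (finPairs n (k, 1))))
  have hinj : ∀ σ : Equiv.Perm (Fin n), Function.Injective (fun p => σ (finPairs n p)) :=
    fun σ => σ.injective.comp (finPairs n).injective
  have hjensen : ∀ x : Fin n → α, Real.exp (γ * ((n.choose 2 : ℝ)⁻¹ *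
      ∑ i : Fin n, ∑ j : Fin n, if i < j then h (x i) (x j) else 0)) ≤ 𝔼 σ, P σ x := by
    intro x
    rw [choose_two_inv_mul_sum_lt_eq_expect_perm fun i j => hsymm (x i) (x j), mul_expect]
    refine (convexOn_exp.map_expect_le univ_nonempty fun _ _ => Set.mem_univ _).trans_eq ?_
    refine expect_congr rfl fun σ _ => ?_
    simp only [P, f, ← Real.exp_sum, mul_sum]
    congr 1
    exact sum_congr rfl fun k _ => by ring
  calc _ ≤ ∫ x, 𝔼 σ, P σ x ∂(Measure.pi fun _ : Fin n => ν) :=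
        integral_mono_of_nonneg (ae_of_all _ fun _ => (Real.exp_pos _).le)
          (integrable_expect fun σ _ => integrable_prod_pairs ν (hinj σ) hint)
          (ae_of_all _ hjensen)
    _ = _ := by
      rw [integral_expect fun σ _ => integrable_prod_pairs ν (hinj σ) hint]
      simp only [integral_prod_pairs ν (hinj _) hint, Fintype.card_fin, Fintype.expect_const]

/-- **Jensen bound for the moment generating function of a U-statistic.** For `X₁, …, Xₙ`
i.i.d. with law `ν` (`n ≥ 2`), a symmetric kernel `h` of two arguments, `m = ⌊n/2⌋` and
`Uₙ = C(n,2)⁻¹ ∑_{i<j} h(Xᵢ, Xⱼ)`, for any `γ > 0` with `E[exp(γ h(X₁,X₂)/m)] < ∞`,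
`E[exp(γ Uₙ)] ≤ (E[exp(γ h(X₁,X₂)/m)])^m`. -/
theorem ustatistic_mgf_bound {α : Type*} [MeasurableSpace α]
    (ν : Measure α) [IsProbabilityMeasure ν] (n : ℕ) (hn : 2 ≤ n)
    (h : α → α → ℝ) (hmeas : Measurable (Function.uncurry h))
    (hsymm : ∀ x y, h x y = h y x) (γ : ℝ) (hγ : 0 < γ)
    (hint : Integrable (fun p : α × α =>
      Real.exp (γ * h p.1 p.2 / (↑(n / 2) : ℝ))) (ν.prod ν)) :
    ∫ x : Fin n → α,
        Real.exp (γ * ((n.choose 2 : ℝ)⁻¹ *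
          ∑ i : Fin n, ∑ j : Fin n, if i < j then h (x i) (x j) else 0))
        ∂(Measure.pi fun _ : Fin n => ν) ≤
      (∫ p : α × α, Real.exp (γ * h p.1 p.2 / (↑(n / 2) : ℝ)) ∂(ν.prod ν)) ^ (n / 2) :=
  ustatistic_mgf_bound_general ν n h hsymm γ hint
end

section
/- Let X_1, …, X_n (n ≥ 2) be i.i.d. random vectors in ℝ^q with B := E[exp(s‖X_1‖)] < ∞ for some s > 0 and Δ := E‖X_1 − X_2‖ < ∞, and let U_n = C(n,2)^{-1} Σ_{1 ≤ i < j ≤ n} ‖X_i − X_j‖. Suppose M > 0 and ε > 0 satisfy E[ ‖X_1 − X_2‖ 𝟙(‖X_1 − X_2‖ > M) ] ≤ ε/2. Then P(|U_n − Δ| ≥ 2ε) ≤ 2 exp( −2 (ε/2)² ⌊n/2⌋ / M² ) + n · B · exp(−sM/2). -/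
/-!
On the event that every `‖Xᵢ‖ < M / 2`, whose complement has probability at most
`n B e^{-sM/2}` by a union bound and a Chernoff bound, the kernel `‖y - z‖` agrees with its
truncation `min ‖y - z‖ M`, whose mean is within `ε / 2` of `Δ`. The truncated U-statistic is
sub-Gaussian by Hoeffding's argument: averaging over all permutations `σ` of the sample writes it
as the mean of the block averages `⌊n/2⌋⁻¹ ∑ₖ h (X_{σ(k)}, X_{σ(⌊n/2⌋ + k)})`, each an average of
`⌊n/2⌋` i.i.d. bounded variables, and by convexity of `exp` the moment generating function of a
mean is at most the mean of the moment generating functions.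
-/

open MeasureTheory ProbabilityTheory Finset Function
open scoped NNReal BigOperators

namespace Equiv.Perm

variable {ι : Type*} [DecidableEq ι]

theorem exists_apply_eq_and_apply_eq {a b c d : ι} (hab : a ≠ b) (hcd : c ≠ d) :
    ∃ π : Perm ι, π c = a ∧ π d = b := by
  refine ⟨(swap c a).trans (swap (swap c a d) b), ?_, by simp⟩
  have hd : swap c a d ≠ a := fun h =>
    hcd ((swap c a).injective (h.trans (swap_apply_left c a).symm)).symm
  simp [swap_apply_of_ne_of_ne hd.symm hab]

variable [Fintype ι] {M : Type*} [AddCommMonoid M] [Module ℚ≥0 M]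

theorem expect_apply_apply_eq_of_ne (F : ι → ι → M) {a b c d : ι} (hab : a ≠ b) (hcd : c ≠ d) :
    𝔼 σ : Perm ι, F (σ a) (σ b) = 𝔼 σ : Perm ι, F (σ c) (σ d) := by
  obtain ⟨π, hπc, hπd⟩ := exists_apply_eq_and_apply_eq hab hcd
  exact Fintype.expect_equiv (Equiv.mulRight π) _ _ fun σ => by simp [hπc, hπd]

theorem expect_apply_apply_eq_expect_offDiag (F : ι → ι → M) {a b : ι} (hab : a ≠ b) :
    𝔼 σ : Perm ι, F (σ a) (σ b) = 𝔼 p ∈ univ.offDiag, F p.1 p.2 := by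
  have hne : (univ.offDiag : Finset (ι × ι)).Nonempty := ⟨(a, b), by simpa using hab⟩
  calc 𝔼 σ : Perm ι, F (σ a) (σ b)
      = 𝔼 p ∈ univ.offDiag, 𝔼 σ : Perm ι, F (σ p.1) (σ p.2) := by
        rw [expect_congr rfl fun p hp => expect_apply_apply_eq_of_ne F (mem_offDiag.1 hp).2.2 hab,
          expect_const hne]
    _ = 𝔼 σ : Perm ι, 𝔼 p ∈ univ.offDiag, F (σ p.1) (σ p.2) := expect_comm _ _ _
    _ = 𝔼 _σ : Perm ι, 𝔼 p ∈ univ.offDiag, F p.1 p.2 :=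
        expect_congr rfl fun σ _ =>
          expect_equiv (σ.prodCongr σ) (by simp [σ.injective.ne_iff]) fun _ _ => rfl
    _ = 𝔼 p ∈ univ.offDiag, F p.1 p.2 := Fintype.expect_const _

end Equiv.Perm

theorem Nat.two_mul_choose_two (n : ℕ) : 2 * n.choose 2 = n * n - n := by
  rw [Nat.choose_two_right, Nat.mul_div_cancel' (Nat.even_mul_pred_self n).two_dvd,
    Nat.mul_sub_one]

namespace Finset

variable {ι : Type*} [Fintype ι] [LinearOrder ι]

theorem sum_offDiag_of_symm {M : Type*} [AddCommMonoid M] (F : ι → ι → M)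
    (hF : ∀ i j, F i j = F j i) :
    ∑ p ∈ univ.offDiag, F p.1 p.2 = 2 • ∑ i, ∑ j, if i < j then F i j else 0 := by
  have hsplit : ∀ i j, (if i ≠ j then F i j else 0) =
      (if i < j then F i j else 0) + if j < i then F j i else 0 := by
    intro i j
    rcases lt_trichotomy i j with h | rfl | h
    · simp [h, h.ne, h.not_gt]
    · simp
    · simp [h, h.ne', h.not_gt, hF i j]
  have hoff : (univ.offDiag : Finset (ι × ι)) = (univ ×ˢ univ).filter fun p => p.1 ≠ p.2 := by
    ext; simp
  rw [hoff, sum_filter, sum_product]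
  simp_rw [hsplit, sum_add_distrib]
  rw [sum_comm (f := fun i j => if j < i then F j i else 0), two_nsmul]

theorem expect_offDiag_of_symm (F : ι → ι → ℝ) (hF : ∀ i j, F i j = F j i) :
    𝔼 p ∈ univ.offDiag, F p.1 p.2 =
      ((Fintype.card ι).choose 2 : ℝ)⁻¹ * ∑ i, ∑ j, if i < j then F i j else 0 := by
  have hcard : ((univ.offDiag : Finset (ι × ι)).card : ℝ) = 2 * (Fintype.card ι).choose 2 := by
    rw [offDiag_card, card_univ, ← Nat.two_mul_choose_two]; push_cast; ring
  rw [expect_eq_sum_div_card, sum_offDiag_of_symm F hF, hcard, nsmul_eq_mul, Nat.cast_ofNat]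
  field_simp

end Finset

theorem Real.exp_expect_le {ι : Type*} {s : Finset ι} (hs : s.Nonempty) (f : ι → ℝ) :
    Real.exp (𝔼 i ∈ s, f i) ≤ 𝔼 i ∈ s, Real.exp (f i) := by
  have hw : ∑ _i ∈ s, ((#s : ℝ))⁻¹ = 1 := by
    rw [sum_const, nsmul_eq_mul, mul_inv_cancel₀ (by simpa using hs.ne_empty)]
  have := convexOn_exp.map_sum_le (t := s) (w := fun _ => ((#s : ℝ))⁻¹) (p := f)
    (fun _ _ => by positivity) hw (fun _ _ => Set.mem_univ _)
  simpa [expect_eq_sum_div_card, sum_div, div_eq_inv_mul, mul_sum] using this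

namespace ProbabilityTheory.HasSubgaussianMGF

variable {Ω : Type*} {mΩ : MeasurableSpace Ω} {μ : Measure Ω} {c : ℝ≥0}

theorem expect {ι : Type*} [Fintype ι] [Nonempty ι] {Y : ι → Ω → ℝ}
    (hY : ∀ i, HasSubgaussianMGF (Y i) c μ) : HasSubgaussianMGF (fun ω => 𝔼 i, Y i ω) c μ := by
  have hexpect : ∀ t, Integrable (fun ω => 𝔼 i, Real.exp (t * Y i ω)) μ := fun t => by
    simp_rw [Fintype.expect_eq_sum_div_card]
    exact (integrable_finsetSum _ fun i _ => (hY i).integrable_exp_mul t).div_const _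
  have hjensen : ∀ t ω, Real.exp (t * 𝔼 i, Y i ω) ≤ 𝔼 i, Real.exp (t * Y i ω) := fun t ω => by
    rw [mul_expect]; exact Real.exp_expect_le univ_nonempty _
  have hmeas : AEMeasurable (fun ω => 𝔼 i, Y i ω) μ := by
    simp_rw [Fintype.expect_eq_sum_div_card]
    exact (Finset.aemeasurable_fun_sum _ fun i _ => (hY i).aemeasurable).div_const _
  have hint : ∀ t, Integrable (fun ω => Real.exp (t * 𝔼 i, Y i ω)) μ := fun t =>
    (hexpect t).mono'
      (Real.measurable_exp.comp_aemeasurable (hmeas.const_mul t)).aestronglyMeasurable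
      (ae_of_all _ fun ω => by rw [Real.norm_of_nonneg (Real.exp_pos _).le]; exact hjensen t ω)
  refine ⟨hint, fun t => ?_⟩
  calc mgf (fun ω => 𝔼 i, Y i ω) μ t ≤ ∫ ω, 𝔼 i, Real.exp (t * Y i ω) ∂μ :=
        integral_mono (hint t) (hexpect t) (hjensen t)
    _ = 𝔼 i, mgf (Y i) μ t := by
        simp_rw [Fintype.expect_eq_sum_div_card, mgf]
        rw [integral_div, integral_finsetSum _ fun i _ => (hY i).integrable_exp_mul t]
    _ ≤ Real.exp (c * t ^ 2 / 2) := expect_le univ_nonempty fun i _ => (hY i).mgf_le t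

theorem measureReal_abs_ge_le [IsFiniteMeasure μ] {X : Ω → ℝ} (h : HasSubgaussianMGF X c μ)
    {ε : ℝ} (hε : 0 ≤ ε) : μ.real {ω | ε ≤ |X ω|} ≤ 2 * Real.exp (-ε ^ 2 / (2 * c)) :=
  calc μ.real {ω | ε ≤ |X ω|} ≤ μ.real ({ω | ε ≤ X ω} ∪ {ω | ε ≤ (-X) ω}) :=
        measureReal_mono fun ω (hω : ε ≤ |X ω|) => le_abs.1 hω
    _ ≤ μ.real {ω | ε ≤ X ω} + μ.real {ω | ε ≤ (-X) ω} := measureReal_union_le _ _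
    _ ≤ 2 * Real.exp (-ε ^ 2 / (2 * c)) := by
        linarith [h.measure_ge_le hε, h.neg.measure_ge_le hε]

end ProbabilityTheory.HasSubgaussianMGF

section Pi

variable {ι κ α : Type*} [Fintype ι] [Fintype κ] [MeasurableSpace α]

theorem hasSubgaussianMGF_pi_expect [Nonempty κ] {ρ : Measure α} [IsProbabilityMeasure ρ]
    {Y : α → ℝ} {c : ℝ≥0} (hY : HasSubgaussianMGF Y c ρ) :
    HasSubgaussianMGF (fun w : κ → α => 𝔼 k, Y (w k)) (c / Fintype.card κ)
      (Measure.pi fun _ => ρ) := by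
  have hindep : iIndepFun (fun k (w : κ → α) => Y (w k)) (Measure.pi fun _ => ρ) :=
    iIndepFun_pi fun _ => hY.aemeasurable
  have hk : ∀ k : κ, HasSubgaussianMGF (fun w : κ → α => Y (w k)) c (Measure.pi fun _ => ρ) :=
    fun k => .of_map (measurable_pi_apply k).aemeasurable
      (by rwa [(measurePreserving_eval _ k).map_eq])
  have hsum := (HasSubgaussianMGF.sum_of_iIndepFun hindep (s := univ) fun k _ => hk k).const_mul
    (Fintype.card κ)⁻¹
  convert hsum using 1
  · simp_rw [Fintype.expect_eq_sum_div_card, div_eq_inv_mul]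
  · rw [sum_const, card_univ, nsmul_eq_mul]
    refine NNReal.eq ?_
    change (c : ℝ) / Fintype.card κ = ((Fintype.card κ : ℝ))⁻¹ ^ 2 * (Fintype.card κ * c)
    field_simp

variable (ν : Measure α) [IsProbabilityMeasure ν]

theorem measurePreserving_pi_comp_of_injective {f : κ → ι} (hf : Injective f) :
    MeasurePreserving (fun x : ι → α => x ∘ f) (Measure.pi fun _ => ν) (Measure.pi fun _ => ν) := by
  classical
  have hsplit := measurePreserving_piEquivPiSubtypeProd (fun _ : ι => ν) (· ∈ Set.range f)
  have hrestrict : MeasurePreserving (fun x : ι → α => fun i : Set.range f => x i)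
      (Measure.pi fun _ => ν) (Measure.pi fun _ => ν) := by
    convert measurePreserving_fst.comp hsplit using 1
    · rfl
    · congr!
  have hrange := (measurePreserving_piCongrLeft (fun _ : Set.range f => ν)
    (Equiv.ofInjective f hf)).symm
  convert hrange.comp hrestrict using 1
  funext x k
  simp [MeasurableEquiv.piCongrLeft, Equiv.piCongrLeft]

theorem measurePreserving_pi_pairs {f : κ ⊕ κ → ι} (hf : Injective f) :
    MeasurePreserving (fun (x : ι → α) k => (x (f (.inl k)), x (f (.inr k))))
      (Measure.pi fun _ => ν) (Measure.pi fun _ => ν.prod ν) :=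
  (measurePreserving_arrowProdEquivProdArrow α α κ (fun _ => ν) (fun _ => ν)).symm.comp
    ((measurePreserving_sumPiEquivProdPi fun _ : κ ⊕ κ => ν).comp
      (measurePreserving_pi_comp_of_injective ν hf))

theorem measureReal_pi_exists_mem_le {S : Set α} (hS : MeasurableSet S) :
    (Measure.pi fun _ : ι => ν).real {x | ∃ i, x i ∈ S} ≤ Fintype.card ι * ν.real S := by
  have hunion : {x : ι → α | ∃ i, x i ∈ S} = ⋃ i, eval i ⁻¹' S := by ext; simp
  calc (Measure.pi fun _ : ι => ν).real {x | ∃ i, x i ∈ S}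
      ≤ ∑ i, (Measure.pi fun _ : ι => ν).real (eval i ⁻¹' S) :=
        hunion ▸ measureReal_iUnion_fintype_le _
    _ = Fintype.card ι * ν.real S := by
        simp [fun i => (measurePreserving_eval (fun _ : ι => ν) i).measureReal_preimage
          hS.nullMeasurableSet]

end Pi

noncomputable def uStatistic {α : Type*} {n : ℕ} (h : α → α → ℝ) (x : Fin n → α) : ℝ :=
  (n.choose 2 : ℝ)⁻¹ * ∑ i, ∑ j, if i < j then h (x i) (x j) else 0

theorem uStatistic_sub_eq_expect_perm {α κ : Type*} [Fintype κ] [Nonempty κ] {n : ℕ}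
    {h : α → α → ℝ} (hh : ∀ y z, h y z = h z y) {f : κ ⊕ κ → Fin n} (hf : Injective f)
    (θ : ℝ) (x : Fin n → α) :
    uStatistic h x - θ =
      𝔼 σ : Equiv.Perm (Fin n), 𝔼 k, (h (x (σ (f (.inl k)))) (x (σ (f (.inr k)))) - θ) := by
  have hk : ∀ k, 𝔼 σ : Equiv.Perm (Fin n), (h (x (σ (f (.inl k)))) (x (σ (f (.inr k)))) - θ) =
      uStatistic h x - θ := fun k => by
    have hne : f (.inl k) ≠ f (.inr k) := hf.ne Sum.inl_ne_inr
    have hoff : (univ.offDiag : Finset (Fin n × Fin n)).Nonempty :=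
      ⟨(f (.inl k), f (.inr k)), by simpa using hne⟩
    rw [Equiv.Perm.expect_apply_apply_eq_expect_offDiag (fun i j => h (x i) (x j) - θ) hne,
      expect_sub_distrib, expect_const hoff,
      expect_offDiag_of_symm (fun i j => h (x i) (x j)) fun i j => hh _ _, Fintype.card_fin,
      uStatistic]
  rw [expect_comm, expect_congr rfl fun k _ => hk k, Fintype.expect_const]

section Hoeffding

variable {α : Type*} [MeasurableSpace α] {ν : Measure α} [IsProbabilityMeasure ν] {n : ℕ}
  {h : α → α → ℝ} {a b : ℝ}

theorem hasSubgaussianMGF_uStatistic (hn : 2 ≤ n) (hmeas : Measurable (uncurry h))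
    (hsymm : ∀ y z, h y z = h z y) (hab : ∀ y z, h y z ∈ Set.Icc a b) :
    HasSubgaussianMGF (fun x => uStatistic h x - ∫ p, h p.1 p.2 ∂(ν.prod ν))
      ((‖b - a‖₊ / 2) ^ 2 / (n / 2 : ℕ)) (Measure.pi fun _ : Fin n => ν) := by
  set θ := ∫ p, h p.1 p.2 ∂(ν.prod ν)
  have : Nonempty (Fin (n / 2)) := ⟨⟨0, by omega⟩⟩
  -- coordinate `k` is paired with coordinate `n / 2 + k`
  let f : Fin (n / 2) ⊕ Fin (n / 2) → Fin n := fun u => Fin.castLE (by omega) (finSumFinEquiv u)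
  have hf : Injective f := (Fin.castLE_injective _).comp finSumFinEquiv.injective
  have hpair : HasSubgaussianMGF (fun p : α × α => h p.1 p.2 - θ) ((‖b - a‖₊ / 2) ^ 2) (ν.prod ν) :=
    hasSubgaussianMGF_of_mem_Icc hmeas.aemeasurable (ae_of_all _ fun p => hab p.1 p.2)
  have hblock := hasSubgaussianMGF_pi_expect (κ := Fin (n / 2)) hpair
  rw [Fintype.card_fin] at hblock
  have hσ : ∀ σ : Equiv.Perm (Fin n), HasSubgaussianMGF
      (fun x => 𝔼 k, (h (x (σ (f (.inl k)))) (x (σ (f (.inr k)))) - θ))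
      ((‖b - a‖₊ / 2) ^ 2 / (n / 2 : ℕ)) (Measure.pi fun _ : Fin n => ν) := fun σ =>
    have hpairs := measurePreserving_pi_pairs ν (σ.injective.comp hf)
    .of_map (X := fun w : Fin (n / 2) → α × α => 𝔼 k, (h (w k).1 (w k).2 - θ))
      hpairs.measurable.aemeasurable (by rwa [hpairs.map_eq])
  exact (HasSubgaussianMGF.expect hσ).congr
    (ae_of_all _ fun x => (uStatistic_sub_eq_expect_perm hsymm hf θ x).symm)

theorem measureReal_abs_uStatistic_sub_ge_le (hn : 2 ≤ n) (hmeas : Measurable (uncurry h))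
    (hsymm : ∀ y z, h y z = h z y) (hab : ∀ y z, h y z ∈ Set.Icc a b) {δ : ℝ} (hδ : 0 ≤ δ) :
    (Measure.pi fun _ : Fin n => ν).real
        {x | δ ≤ |uStatistic h x - ∫ p, h p.1 p.2 ∂(ν.prod ν)|} ≤
      2 * Real.exp (-2 * δ ^ 2 * (n / 2 : ℕ) / (b - a) ^ 2) := by
  refine ((hasSubgaussianMGF_uStatistic hn hmeas hsymm hab).measureReal_abs_ge_le hδ).trans_eq ?_
  push_cast
  rw [Real.norm_eq_abs, div_pow, sq_abs]
  congr 2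
  field_simp

end Hoeffding

theorem measureReal_pi_exists_norm_ge_le {ι E : Type*} [Fintype ι] [NormedAddCommGroup E]
    [MeasurableSpace E] [OpensMeasurableSpace E] {ν : Measure E} [IsProbabilityMeasure ν] {s : ℝ}
    (hs : 0 ≤ s) (hint : Integrable (fun y => Real.exp (s * ‖y‖)) ν) (r : ℝ) :
    (Measure.pi fun _ : ι => ν).real {x | ∃ i, r ≤ ‖x i‖} ≤
      Fintype.card ι * (∫ y, Real.exp (s * ‖y‖) ∂ν) * Real.exp (-s * r) :=
  calc (Measure.pi fun _ : ι => ν).real {x | ∃ i, r ≤ ‖x i‖}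
      ≤ Fintype.card ι * ν.real {y | r ≤ ‖y‖} :=
        measureReal_pi_exists_mem_le ν (measurableSet_le measurable_const measurable_norm)
    _ ≤ Fintype.card ι * (Real.exp (-s * r) * mgf (‖·‖) ν s) := by
        gcongr; exact measure_ge_le_exp_mul_mgf r hs hint
    _ = _ := by rw [mgf]; ring

theorem abs_integral_sub_integral_min_le {Ω : Type*} [MeasurableSpace Ω] {μ : Measure Ω}
    [IsFiniteMeasure μ] {f : Ω → ℝ} (hf : Integrable f μ) {M : ℝ} (hM : 0 ≤ M)
    (htail : Integrable (fun ω => if M < f ω then f ω else 0) μ) :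
    |∫ ω, f ω ∂μ - ∫ ω, min (f ω) M ∂μ| ≤ ∫ ω, (if M < f ω then f ω else 0) ∂μ := by
  have hmin : Integrable (fun ω => min (f ω) M) μ := hf.inf (integrable_const M)
  rw [abs_of_nonneg (sub_nonneg.2 (integral_mono hmin hf fun ω => min_le_left _ _)),
    ← integral_sub hf hmin]
  refine integral_mono (hf.sub hmin) htail fun ω => ?_
  dsimp only
  split_ifs with h
  · rw [min_eq_right h.le]; linarith
  · rw [min_eq_left (not_lt.1 h), sub_self]

theorem abs_integral_integral_sub_integral_min_le {α : Type*} [MeasurableSpace α] {ν : Measure α}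
    [IsFiniteMeasure ν] {k : α → α → ℝ} (hk : Measurable (uncurry k))
    (hint : Integrable (uncurry k) (ν.prod ν)) {M : ℝ} (hM : 0 ≤ M) :
    |∫ y, ∫ z, k y z ∂ν ∂ν - ∫ p, min (k p.1 p.2) M ∂(ν.prod ν)| ≤
      ∫ y, ∫ z, (if M < k y z then k y z else 0) ∂ν ∂ν := by
  have htail : Integrable (fun p : α × α => if M < k p.1 p.2 then k p.1 p.2 else 0) (ν.prod ν) :=
    hint.mono (hk.ite (measurableSet_lt measurable_const hk) measurable_const).aestronglyMeasurable
      (ae_of_all _ fun p => by split_ifs <;> simp [uncurry_def])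
  have hprod : ∫ y, ∫ z, k y z ∂ν ∂ν = ∫ p, k p.1 p.2 ∂(ν.prod ν) := (integral_prod _ hint).symm
  have htailprod : ∫ y, ∫ z, (if M < k y z then k y z else 0) ∂ν ∂ν =
      ∫ p, (if M < k p.1 p.2 then k p.1 p.2 else 0) ∂(ν.prod ν) := (integral_prod _ htail).symm
  rw [hprod, htailprod]
  exact abs_integral_sub_integral_min_le hint hM htail

theorem uStatistic_norm_sub_eq_min {E : Type*} [SeminormedAddCommGroup E] {n : ℕ} {M : ℝ}
    {x : Fin n → E} (hx : ∀ i, ‖x i‖ < M / 2) :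
    uStatistic (fun y z => ‖y - z‖) x = uStatistic (fun y z => min ‖y - z‖ M) x := by
  have hle : ∀ i j, min ‖x i - x j‖ M = ‖x i - x j‖ := fun i j =>
    min_eq_left (by linarith [norm_sub_le (x i) (x j), hx i, hx j])
  simp only [uStatistic, hle]

theorem le_abs_uStatistic_min_sub {E : Type*} [SeminormedAddCommGroup E] {n : ℕ}
    {M ε θ θM : ℝ} (hθ : |θ - θM| ≤ ε / 2) {x : Fin n → E} (hx : ∀ i, ‖x i‖ < M / 2)
    (hdev : 2 * ε ≤ |uStatistic (fun y z => ‖y - z‖) x - θ|) :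
    3 * ε / 2 ≤ |uStatistic (fun y z => min ‖y - z‖ M) x - θM| := by
  rw [uStatistic_norm_sub_eq_min hx] at hdev
  linarith [abs_sub_le (uStatistic (fun y z => min ‖y - z‖ M) x) θM θ, abs_sub_comm θM θ]

/-- **Concentration of the Gini-mean-difference U-statistic.** For `X₁, …, Xₙ` i.i.d.
random vectors in `ℝ^q` (`n ≥ 2`) with `B = E[exp(s ‖X₁‖)] < ∞` and
`Δ = E‖X₁ - X₂‖ < ∞`, and `Uₙ = C(n,2)⁻¹ ∑_{i<j} ‖Xᵢ - Xⱼ‖`: if `M, ε > 0` satisfy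
`E[‖X₁ - X₂‖ 𝟙(‖X₁ - X₂‖ > M)] ≤ ε/2`, then
`P(|Uₙ - Δ| ≥ 2ε) ≤ 2 exp(-2 (ε/2)² ⌊n/2⌋ / M²) + n B exp(-s M / 2)`. -/
theorem gmd_ustatistic_concentration (q n : ℕ) (hn : 2 ≤ n)
    (ν : Measure (EuclideanSpace ℝ (Fin q))) [IsProbabilityMeasure ν]
    (s B : ℝ) (hs : 0 < s)
    (hBint : Integrable (fun x : EuclideanSpace ℝ (Fin q) => Real.exp (s * ‖x‖)) ν)
    (hB : B = ∫ x, Real.exp (s * ‖x‖) ∂ν)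
    (hΔint : Integrable
      (fun p : EuclideanSpace ℝ (Fin q) × EuclideanSpace ℝ (Fin q) => ‖p.1 - p.2‖)
      (ν.prod ν))
    (M ε : ℝ) (hM : 0 < M) (hε : 0 < ε)
    (htrunc : ∫ y, ∫ z, (if M < ‖y - z‖ then ‖y - z‖ else 0) ∂ν ∂ν ≤ ε / 2) :
    (Measure.pi fun _ : Fin n => ν)
        {x : Fin n → EuclideanSpace ℝ (Fin q) |
          2 * ε ≤ |(n.choose 2 : ℝ)⁻¹ *
                (∑ i : Fin n, ∑ j : Fin n, if i < j then ‖x i - x j‖ else 0) -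
              ∫ y, ∫ z, ‖y - z‖ ∂ν ∂ν|} ≤
      ENNReal.ofReal (2 * Real.exp (-2 * (ε / 2) ^ 2 * (↑(n / 2) : ℝ) / M ^ 2) +
        (n : ℝ) * B * Real.exp (-s * M / 2)) := by
  have hK : Measurable fun p : EuclideanSpace ℝ (Fin q) × EuclideanSpace ℝ (Fin q) =>
      ‖p.1 - p.2‖ := by fun_prop
  have hθ := (abs_integral_integral_sub_integral_min_le hK hΔint hM.le).trans htrunc
  have hsub : {x : Fin n → EuclideanSpace ℝ (Fin q) |
        2 * ε ≤ |uStatistic (fun y z => ‖y - z‖) x - ∫ y, ∫ z, ‖y - z‖ ∂ν ∂ν|} ⊆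
      {x | ∃ i, M / 2 ≤ ‖x i‖} ∪ {x | 3 * ε / 2 ≤
        |uStatistic (fun y z => min ‖y - z‖ M) x - ∫ p, min ‖p.1 - p.2‖ M ∂(ν.prod ν)|} := by
    intro x hx
    by_cases hfar : ∃ i, M / 2 ≤ ‖x i‖
    · exact Or.inl hfar
    · push Not at hfar
      exact Or.inr (le_abs_uStatistic_min_sub hθ hfar hx)
  have hfar := measureReal_pi_exists_norm_ge_le (ι := Fin n) hs.le hBint (M / 2)
  rw [Fintype.card_fin, ← hB, ← mul_div_assoc] at hfar
  have hnear := measureReal_abs_uStatistic_sub_ge_le (ν := ν) hn (hK.min measurable_const)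
    (fun y z => by rw [norm_sub_rev]) (fun y z => ⟨le_min (norm_nonneg _) hM.le, min_le_right _ _⟩)
    (by positivity : 0 ≤ 3 * ε / 2)
  have hexp : -2 * (3 * ε / 2) ^ 2 * (n / 2 : ℕ) / (M - 0) ^ 2 ≤
      -2 * (ε / 2) ^ 2 * (n / 2 : ℕ) / M ^ 2 := by
    rw [sub_zero]
    refine div_le_div_of_nonneg_right ?_ (sq_nonneg M)
    nlinarith [(Nat.cast_nonneg (n / 2) : (0 : ℝ) ≤ (n / 2 : ℕ))]
  rw [← ofReal_measureReal]
  refine ENNReal.ofReal_le_ofReal ?_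
  calc _ ≤ _ := measureReal_mono hsub
    _ ≤ _ := measureReal_union_le _ _
    _ ≤ _ := by linarith [Real.exp_le_exp.2 hexp]
end

section
/- Let X be a categorical random variable taking values in a finite set V equipped with the discrete metric d(x_1, x_2) = 𝟙(x_1 ≠ x_2), and let Y be a categorical variable taking values L_1, …, L_K with p_k = P(Y = L_k) > 0. Define GI(X) = 1 − Σ_{v ∈ V} P(X = v)² and GI(X | Y = L_k) = 1 − Σ_{v ∈ V} P(X = v | Y = L_k)², and assume GI(X) > 0. Then the Gini distance correlation of (X, Y) under the discrete metric equals the normalized Gini impurity reduction: ρ = ( GI(X) − Σ_{k=1}^K p_k GI(X | Y = L_k) ) / GI(X). -/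
/-!
Under the discrete metric the inner integral `∫ 𝟙(X ω₁ ≠ X ω₂) dν(ω₂)` is `1 - ν(X = X ω₁)`,
and integrating over `ω₁` gives `1 - ∑ᵥ ν(X = v)²`. So the Gini mean difference is the Gini
impurity, both for `μ` (`Δ = GI(X)`) and for every conditional law (`Δₖ = GI(X | Y = Lₖ)`).
-/

open MeasureTheory ProbabilityTheory

section
variable {Ω V : Type*} [MeasurableSpace Ω] [MeasurableSpace V] [MeasurableSingletonClass V]
  (ν : Measure Ω) {X : Ω → V}

lemma integral_ite_ne_eq_one_sub_measureReal [DecidableEq V] [IsProbabilityMeasure ν]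
    (hX : Measurable X) (x : V) :
    ∫ ω, (if x ≠ X ω then (1 : ℝ) else 0) ∂ν = 1 - ν.real (X ⁻¹' {x}) := by
  have hset : MeasurableSet (X ⁻¹' {x}) := hX (MeasurableSet.singleton x)
  have hfun : (fun ω => if x ≠ X ω then (1 : ℝ) else 0)
      = fun ω => 1 - (X ⁻¹' {x}).indicator 1 ω := by
    funext ω
    by_cases h : x = X ω <;> simp [h, eq_comm]
  rw [hfun, integral_sub (integrable_const 1) ((integrable_const 1).indicator hset),
    integral_indicator_one hset]
  simp

lemma integral_measureReal_preimage_singleton_eq_sum_sq [Fintype V] [IsFiniteMeasure ν]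
    (hX : Measurable X) :
    ∫ ω, ν.real (X ⁻¹' {X ω}) ∂ν = ∑ v : V, ν.real (X ⁻¹' {v}) ^ 2 := by
  have hmeas : Measurable fun v : V => ν.real (X ⁻¹' {v}) := measurable_of_countable _
  rw [← integral_map hX.aemeasurable hmeas.aestronglyMeasurable,
    integral_fintype .of_finite]
  refine Finset.sum_congr rfl fun v _ => ?_
  rw [map_measureReal_apply hX (MeasurableSet.singleton v), smul_eq_mul, sq]

lemma integral_integral_ite_ne_eq_one_sub_sum_sq [Fintype V] [DecidableEq V]
    [IsProbabilityMeasure ν] (hX : Measurable X) :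
    ∫ ω₁, ∫ ω₂, (if X ω₁ ≠ X ω₂ then (1 : ℝ) else 0) ∂ν ∂ν
      = 1 - ∑ v : V, (ν (X ⁻¹' {v})).toReal ^ 2 := by
  have hint : Integrable (fun ω => ν.real (X ⁻¹' {X ω})) ν :=
    (integrable_map_measure (g := fun v => ν.real (X ⁻¹' {v}))
      (measurable_of_countable _).aestronglyMeasurable hX.aemeasurable).mp .of_finite
  simp_rw [integral_ite_ne_eq_one_sub_measureReal ν hX]
  rw [integral_sub (integrable_const 1) hint,
    integral_measureReal_preimage_singleton_eq_sum_sq ν hX]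
  simp [measureReal_def]

end

theorem gini_corr_eq_impurity_reduction_general {Ω V : Type*} [MeasurableSpace Ω]
    [Fintype V] [DecidableEq V] [MeasurableSpace V] [MeasurableSingletonClass V]
    (μ : Measure Ω) [IsProbabilityMeasure μ] (K : ℕ)
    (X : Ω → V) (Y : Ω → Fin K) (hX : Measurable X)
    (hp : ∀ k, 0 < (μ (Y ⁻¹' {k})).toReal)
    (Δ : ℝ) (Δk : Fin K → ℝ) (GIX : ℝ) (GIXk : Fin K → ℝ)
    (hΔ : Δ = ∫ ω₁, ∫ ω₂, (if X ω₁ ≠ X ω₂ then (1 : ℝ) else 0) ∂μ ∂μ)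
    (hΔk : ∀ k, Δk k =
      ∫ ω₁, ∫ ω₂, (if X ω₁ ≠ X ω₂ then (1 : ℝ) else 0) ∂(μ[|Y ⁻¹' {k}]) ∂(μ[|Y ⁻¹' {k}]))
    (hGIX : GIX = 1 - ∑ v : V, (μ (X ⁻¹' {v})).toReal ^ 2)
    (hGIXk : ∀ k, GIXk k = 1 - ∑ v : V, ((μ[|Y ⁻¹' {k}]) (X ⁻¹' {v})).toReal ^ 2) :
    (Δ - ∑ k : Fin K, (μ (Y ⁻¹' {k})).toReal * Δk k) / Δ =
      (GIX - ∑ k : Fin K, (μ (Y ⁻¹' {k})).toReal * GIXk k) / GIX := by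
  have hΔ_eq : Δ = GIX := by
    rw [hΔ, hGIX, integral_integral_ite_ne_eq_one_sub_sum_sq μ hX]
  have hΔk_eq (k : Fin K) : Δk k = GIXk k := by
    have : IsProbabilityMeasure (μ[|Y ⁻¹' {k}]) :=
      cond_isProbabilityMeasure (ENNReal.toReal_pos_iff.mp (hp k)).1.ne'
    rw [hΔk, hGIXk, integral_integral_ite_ne_eq_one_sub_sum_sq _ hX]
  simp only [hΔ_eq, hΔk_eq]

/-- **Gini distance correlation under the discrete metric is the normalized Gini impurity
reduction.** For a categorical `X` with values in a finite set `V` endowed with the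
discrete metric and a categorical `Y` with `pₖ = P(Y = Lₖ) > 0`, if `GI(X) > 0` then
`ρ = (Δ - ∑ₖ pₖ Δₖ)/Δ = (GI(X) - ∑ₖ pₖ GI(X | Y = Lₖ)) / GI(X)`. -/
theorem gini_corr_eq_impurity_reduction {Ω V : Type*} [MeasurableSpace Ω]
    [Fintype V] [DecidableEq V] [MeasurableSpace V] [MeasurableSingletonClass V]
    (μ : Measure Ω) [IsProbabilityMeasure μ] (K : ℕ)
    (X : Ω → V) (Y : Ω → Fin K) (hX : Measurable X) (hY : Measurable Y)
    (hp : ∀ k, 0 < (μ (Y ⁻¹' {k})).toReal)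
    (Δ : ℝ) (Δk : Fin K → ℝ) (GIX : ℝ) (GIXk : Fin K → ℝ)
    (hΔ : Δ = ∫ ω₁, ∫ ω₂, (if X ω₁ ≠ X ω₂ then (1 : ℝ) else 0) ∂μ ∂μ)
    (hΔk : ∀ k, Δk k =
      ∫ ω₁, ∫ ω₂, (if X ω₁ ≠ X ω₂ then (1 : ℝ) else 0) ∂(μ[|Y ⁻¹' {k}]) ∂(μ[|Y ⁻¹' {k}]))
    (hGIX : GIX = 1 - ∑ v : V, (μ (X ⁻¹' {v})).toReal ^ 2)
    (hGIXk : ∀ k, GIXk k = 1 - ∑ v : V, ((μ[|Y ⁻¹' {k}]) (X ⁻¹' {v})).toReal ^ 2)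
    (hΔpos : 0 < Δ) (hGIpos : 0 < GIX) :
    (Δ - ∑ k : Fin K, (μ (Y ⁻¹' {k})).toReal * Δk k) / Δ =
      (GIX - ∑ k : Fin K, (μ (Y ⁻¹' {k})).toReal * GIXk k) / GIX :=
  gini_corr_eq_impurity_reduction_general μ K X Y hX hp Δ Δk GIX GIXk hΔ hΔk hGIX hGIXk
end

section
/- Let ν_1, …, ν_K be Borel probability measures on ℝ^q, each with finite first moment (∫ ‖x‖ dν_k(x) < ∞), let p_1, …, p_K > 0 with Σ_k p_k = 1, and let ν = Σ_k p_k ν_k be the mixture. Then ∫∫ ‖x − y‖ dν(x) dν(y) − Σ_{k=1}^K p_k ∫∫ ‖x − y‖ dν_k(x) dν_k(y) ≥ 0; that is, the Gini distance covariance gCov = Δ − Σ_k p_k Δ_k is nonnegative, and consequently the Gini distance correlation ρ = gCov/Δ lies in [0, 1] whenever Δ = ∫∫ ‖x − y‖ dν dν > 0. -/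
/-!
The key fact is the energy-distance inequality `E‖X - X'‖ + E‖Y - Y'‖ ≤ 2 E‖X - Y‖` for
independent `X, X' ~ α` and `Y, Y' ~ β`. On `ℝ`, writing `F, G` for the distribution functions,
`E|X - Y| = ∫ (F (1 - G) + (1 - F) G)`, and the inequality holds pointwise since it amounts to
`(F - G)² ≥ 0`. In a Euclidean space `‖v‖` is a constant multiple of `E|⟪v, Z⟫|` for a standard
Gaussian vector `Z`, so averaging the one-dimensional inequality over the projections `⟪·, Z⟫`
gives the general case. Finally `Δ` expands bilinearly as `∑ⱼ ∑ₖ pⱼ pₖ E‖Xⱼ - Xₖ‖` with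
`Xⱼ ~ νⱼ`, and the inequality applied to each pair `(j, k)` gives `Δ ≥ ∑ₖ pₖ Δₖ`.
-/

open MeasureTheory ProbabilityTheory Set
open scoped ENNReal NNReal RealInnerProductSpace

/-- Valued in `ℝ≥0∞`, so that no integrability side conditions arise; the paper's `Δₖ` is
`meanDist νₖ νₖ`. -/
noncomputable def meanDist {X : Type*} [PseudoEMetricSpace X] [MeasurableSpace X]
    (α β : Measure X) : ℝ≥0∞ :=
  ∫⁻ x, ∫⁻ y, edist x y ∂β ∂α

theorem meanDist_sum_smul_left {X ι : Type*} [PseudoEMetricSpace X] [MeasurableSpace X]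
    (s : Finset ι) (c : ι → ℝ≥0∞) (μ : ι → Measure X) (ν : Measure X) :
    meanDist (∑ i ∈ s, c i • μ i) ν = ∑ i ∈ s, c i * meanDist (μ i) ν := by
  simp_rw [meanDist, lintegral_finsetSum_measure, lintegral_smul_measure, smul_eq_mul]

section PseudoEMetric

variable {X : Type*} [PseudoEMetricSpace X] [MeasurableSpace X] [OpensMeasurableSpace X]
  [SecondCountableTopology X]

theorem meanDist_map {Ω : Type*} [MeasurableSpace Ω] (α β : Measure Ω) [SFinite β] {f : Ω → X}
    (hf : Measurable f) :
    meanDist (α.map f) (β.map f) = ∫⁻ x, ∫⁻ y, edist (f x) (f y) ∂β ∂α := by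
  rw [meanDist, lintegral_map (measurable_edist.lintegral_prod_right') hf]
  congr with x
  exact lintegral_map (by fun_prop) hf

theorem meanDist_sum_smul_right {ι : Type*} (s : Finset ι) (c : ι → ℝ≥0∞) (μ : Measure X)
    (ν : ι → Measure X) [∀ i, SFinite (ν i)] :
    meanDist μ (∑ i ∈ s, c i • ν i) = ∑ i ∈ s, c i * meanDist μ (ν i) := by
  simp_rw [meanDist, lintegral_finsetSum_measure, lintegral_smul_measure, smul_eq_mul]
  rw [lintegral_finsetSum _ fun i _ => (measurable_edist.lintegral_prod_right').const_mul _]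
  simp_rw [lintegral_const_mul _ measurable_edist.lintegral_prod_right']

end PseudoEMetric

section NormedAddCommGroup

variable {E : Type*} [NormedAddCommGroup E] [MeasurableSpace E] [BorelSpace E]
  [SecondCountableTopology E]

theorem meanDist_eq_lintegral_prod (α β : Measure E) [SFinite β] :
    meanDist α β = ∫⁻ p, ENNReal.ofReal ‖p.1 - p.2‖ ∂α.prod β := by
  simp_rw [meanDist, ← lintegral_prod _ measurable_edist.aemeasurable, edist_dist, dist_eq_norm]

variable {α β : Measure E} [IsFiniteMeasure α] [IsFiniteMeasure β]

theorem integrable_norm_sub_prod (hα : Integrable (‖·‖) α) (hβ : Integrable (‖·‖) β) :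
    Integrable (fun p : E × E => ‖p.1 - p.2‖) (α.prod β) := by
  have hα' : Integrable id α := (integrable_norm_iff aestronglyMeasurable_id).1 hα
  have hβ' : Integrable id β := (integrable_norm_iff aestronglyMeasurable_id).1 hβ
  exact ((hα'.comp_fst β).sub (hβ'.comp_snd α)).norm

theorem meanDist_ne_top (hα : Integrable (‖·‖) α) (hβ : Integrable (‖·‖) β) :
    meanDist α β ≠ ∞ := by
  rw [meanDist_eq_lintegral_prod]
  exact (integrable_norm_sub_prod hα hβ).lintegral_lt_top.ne

theorem integral_integral_norm_sub (hα : Integrable (‖·‖) α) (hβ : Integrable (‖·‖) β) :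
    ∫ x, ∫ y, ‖x - y‖ ∂β ∂α = (meanDist α β).toReal := by
  have h := integrable_norm_sub_prod hα hβ
  rw [← integral_prod _ h, meanDist_eq_lintegral_prod,
    integral_eq_lintegral_of_nonneg_ae (ae_of_all _ fun _ => norm_nonneg _) h.1]

end NormedAddCommGroup

theorem isProbabilityMeasure_sum_smul {Ω ι : Type*} [MeasurableSpace Ω] [Fintype ι]
    (μ : ι → Measure Ω) [∀ i, IsProbabilityMeasure (μ i)] (c : ι → ℝ≥0∞) (hc : ∑ i, c i = 1) :
    IsProbabilityMeasure (∑ i, c i • μ i) :=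
  ⟨by simp [hc]⟩

theorem ENNReal.mul_add_mul_le_of_add_eq_one {a a' b b' : ℝ≥0∞} (ha : a + a' = 1)
    (hb : b + b' = 1) : a * a' + b * b' ≤ a * b' + a' * b := by
  lift a to ℝ≥0 using ne_top_of_le_ne_top one_ne_top (ha ▸ le_self_add)
  lift a' to ℝ≥0 using ne_top_of_le_ne_top one_ne_top (ha ▸ le_add_self)
  lift b to ℝ≥0 using ne_top_of_le_ne_top one_ne_top (hb ▸ le_self_add)
  lift b' to ℝ≥0 using ne_top_of_le_ne_top one_ne_top (hb ▸ le_add_self)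
  norm_cast at ha hb ⊢
  rw [← NNReal.coe_le_coe]
  have ha' := congrArg NNReal.toReal ha
  have hb' := congrArg NNReal.toReal hb
  push_cast at ha' hb' ⊢
  nlinarith [sq_nonneg ((a : ℝ) - b)]

namespace Real

theorem lintegral_lintegral_volume_Ico (α β : Measure ℝ) [SFinite α] [SFinite β] :
    ∫⁻ s, ∫⁻ t, volume (Ico s t) ∂β ∂α = ∫⁻ u, α (Iic u) * β (Ioi u) := by
  let S : Set ((ℝ × ℝ) × ℝ) := {x | x.1.1 ≤ x.2} ∩ {x | x.2 < x.1.2}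
  have hS : MeasurableSet S :=
    (measurableSet_le (by fun_prop) measurable_snd).inter
      (measurableSet_lt measurable_snd (by fun_prop))
  calc ∫⁻ s, ∫⁻ t, volume (Ico s t) ∂β ∂α = (α.prod β).prod volume S := by
        rw [Measure.prod_apply hS, lintegral_prod _
          (measurable_measure_prodMk_left hS).aemeasurable]
        rfl
    _ = ∫⁻ u, α (Iic u) * β (Ioi u) := by
        rw [Measure.prod_apply_symm hS]
        congr with u
        rw [← Measure.prod_prod]
        rfl

theorem meanDist_eq_lintegral (α β : Measure ℝ) [SFinite α] [SFinite β] :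
    meanDist α β = ∫⁻ u, (α (Iic u) * β (Ioi u) + α (Ioi u) * β (Iic u)) := by
  have hedist (s t : ℝ) : edist s t = volume (Ico s t) + volume (Ico t s) := by
    rw [edist_dist, Real.dist_eq, volume_Ico, volume_Ico]
    rcases le_total s t with h | h
    · rw [abs_sub_comm, abs_of_nonneg (sub_nonneg.2 h), ENNReal.ofReal_of_nonpos (sub_nonpos.2 h),
        add_zero]
    · rw [abs_of_nonneg (sub_nonneg.2 h), ENNReal.ofReal_of_nonpos (sub_nonpos.2 h), zero_add]
  have hIco : Measurable fun p : ℝ × ℝ => volume (Ico p.1 p.2) := by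
    simp_rw [volume_Ico]; fun_prop
  have hIic (μ : Measure ℝ) : Measurable fun u => μ (Iic u) :=
    Monotone.measurable fun _ _ h => measure_mono (Iic_subset_Iic.2 h)
  have hIoi (μ : Measure ℝ) : Measurable fun u => μ (Ioi u) :=
    Antitone.measurable fun _ _ h => measure_mono (Ioi_subset_Ioi h)
  simp_rw [meanDist, hedist]
  rw [lintegral_add_left (f := fun u => α (Iic u) * β (Ioi u)) ((hIic α).mul (hIoi β))]
  conv_lhs =>
    enter [2, s]
    rw [lintegral_add_left (f := fun t => volume (Ico s t)) (hIco.comp measurable_prodMk_left)]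
  rw [lintegral_add_left hIco.lintegral_prod_right',
    lintegral_lintegral_swap (f := fun s t => volume (Ico t s))
      (hIco.comp measurable_swap).aemeasurable,
    lintegral_lintegral_volume_Ico, lintegral_lintegral_volume_Ico]
  simp_rw [mul_comm (β _)]

theorem meanDist_add_meanDist_le (α β : Measure ℝ) [IsProbabilityMeasure α]
    [IsProbabilityMeasure β] : meanDist α α + meanDist β β ≤ 2 * meanDist α β := by
  simp_rw [meanDist_eq_lintegral]
  refine (le_lintegral_add _ _).trans ?_
  rw [← lintegral_const_mul' _ _ ENNReal.ofNat_ne_top]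
  refine lintegral_mono fun u => ?_
  have h := ENNReal.mul_add_mul_le_of_add_eq_one
    (prob_add_prob_compl (μ := α) (measurableSet_Iic (a := u)))
    (prob_add_prob_compl (μ := β) (measurableSet_Iic (a := u)))
  rw [compl_Iic] at h
  calc α (Iic u) * α (Ioi u) + α (Ioi u) * α (Iic u)
        + (β (Iic u) * β (Ioi u) + β (Ioi u) * β (Iic u))
      = 2 * (α (Iic u) * α (Ioi u) + β (Iic u) * β (Ioi u)) := by ring
    _ ≤ 2 * (α (Iic u) * β (Ioi u) + α (Ioi u) * β (Iic u)) := by gcongr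

end Real

theorem lintegral_abs_gaussianReal_ne_top :
    ∫⁻ x, ENNReal.ofReal |x| ∂gaussianReal 0 1 ≠ ∞ :=
  (IsGaussian.integrable_id (μ := gaussianReal 0 1)).abs.lintegral_lt_top.ne

theorem lintegral_abs_gaussianReal_ne_zero :
    ∫⁻ x, ENNReal.ofReal |x| ∂gaussianReal 0 1 ≠ 0 := by
  have := nullSingletonClass_gaussianReal (μ := 0) one_ne_zero
  rw [Ne, lintegral_eq_zero_iff (by fun_prop)]
  intro h
  obtain ⟨x, hx0, hx⟩ := (h.and (Measure.ae_ne _ 0)).exists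
  simp [hx] at hx0

section InnerProductSpace

variable {E : Type*} [NormedAddCommGroup E] [InnerProductSpace ℝ E] [FiniteDimensional ℝ E]
  [MeasurableSpace E] [BorelSpace E]

theorem lintegral_abs_inner_stdGaussian (v : E) :
    ∫⁻ g, ENNReal.ofReal |⟪v, g⟫| ∂stdGaussian E
      = ENNReal.ofReal ‖v‖ * ∫⁻ x, ENNReal.ofReal |x| ∂gaussianReal 0 1 := by
  have hlaw : (stdGaussian E).map (innerSL ℝ v) = (gaussianReal 0 1).map (‖v‖ * ·) := by
    rw [IsGaussian.map_eq_gaussianReal, integral_strongDual_stdGaussian, variance_dual_stdGaussian,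
      innerSL_apply_norm, gaussianReal_map_const_mul, mul_zero, mul_one]
    congr
    ext
    simp
  calc ∫⁻ g, ENNReal.ofReal |⟪v, g⟫| ∂stdGaussian E
      = ∫⁻ x, ENNReal.ofReal |x| ∂(stdGaussian E).map (innerSL ℝ v) := by
        rw [lintegral_map (by fun_prop) (by fun_prop)]; rfl
    _ = ∫⁻ x, ENNReal.ofReal |‖v‖ * x| ∂gaussianReal 0 1 := by
        rw [hlaw, lintegral_map (by fun_prop) (by fun_prop)]
    _ = ENNReal.ofReal ‖v‖ * ∫⁻ x, ENNReal.ofReal |x| ∂gaussianReal 0 1 := by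
        simp_rw [abs_mul, abs_norm, ENNReal.ofReal_mul (norm_nonneg v)]
        exact lintegral_const_mul _ (by fun_prop)

theorem lintegral_abs_gaussianReal_mul_meanDist (α β : Measure E) [SFinite α] [SFinite β] :
    (∫⁻ x, ENNReal.ofReal |x| ∂gaussianReal 0 1) * meanDist α β
      = ∫⁻ g, meanDist (α.map (⟪·, g⟫)) (β.map (⟪·, g⟫)) ∂stdGaussian E := by
  set C := ∫⁻ x, ENNReal.ofReal |x| ∂gaussianReal 0 1
  have hproj (x y : E) : C * edist x y = ∫⁻ g, edist ⟪x, g⟫ ⟪y, g⟫ ∂stdGaussian E := by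
    rw [edist_dist, dist_eq_norm, mul_comm, ← lintegral_abs_inner_stdGaussian]
    simp_rw [edist_dist, Real.dist_eq, inner_sub_left]
  calc C * meanDist α β = ∫⁻ x, ∫⁻ y, C * edist x y ∂β ∂α := by
        rw [meanDist, ← lintegral_const_mul' _ _ lintegral_abs_gaussianReal_ne_top]
        congr with x
        rw [← lintegral_const_mul' _ _ lintegral_abs_gaussianReal_ne_top]
    _ = ∫⁻ x, ∫⁻ g, ∫⁻ y, edist ⟪x, g⟫ ⟪y, g⟫ ∂β ∂stdGaussian E ∂α := by
        simp_rw [hproj]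
        congr with x
        exact lintegral_lintegral_swap (by fun_prop)
    _ = ∫⁻ g, ∫⁻ x, ∫⁻ y, edist ⟪x, g⟫ ⟪y, g⟫ ∂β ∂α ∂stdGaussian E :=
        lintegral_lintegral_swap (by fun_prop)
    _ = ∫⁻ g, meanDist (α.map (⟪·, g⟫)) (β.map (⟪·, g⟫)) ∂stdGaussian E := by
        congr with g
        rw [meanDist_map α β (by fun_prop : Measurable fun x : E => ⟪x, g⟫)]

theorem meanDist_add_meanDist_le (α β : Measure E) [IsProbabilityMeasure α]
    [IsProbabilityMeasure β] : meanDist α α + meanDist β β ≤ 2 * meanDist α β := by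
  rw [← ENNReal.mul_le_mul_iff_right lintegral_abs_gaussianReal_ne_zero
    lintegral_abs_gaussianReal_ne_top, mul_add, mul_left_comm,
    lintegral_abs_gaussianReal_mul_meanDist, lintegral_abs_gaussianReal_mul_meanDist,
    lintegral_abs_gaussianReal_mul_meanDist, ← lintegral_const_mul' _ _ ENNReal.ofNat_ne_top]
  refine (le_lintegral_add _ _).trans (lintegral_mono fun g => ?_)
  have hg : Measurable fun x : E => ⟪x, g⟫ := by fun_prop
  have := Measure.isProbabilityMeasure_map (μ := α) hg.aemeasurable
  have := Measure.isProbabilityMeasure_map (μ := β) hg.aemeasurable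
  exact Real.meanDist_add_meanDist_le _ _

theorem sum_mul_meanDist_self_le {ι : Type*} [Fintype ι] (μ : ι → Measure E)
    [∀ i, IsProbabilityMeasure (μ i)] (c : ι → ℝ≥0∞) (hc : ∑ i, c i = 1) :
    ∑ i, c i * meanDist (μ i) (μ i) ≤ meanDist (∑ i, c i • μ i) (∑ i, c i • μ i) := by
  set D := fun i j => meanDist (μ i) (μ j)
  have hcollapse (f : ι → ℝ≥0∞) : ∑ i, ∑ j, c i * c j * f i = ∑ i, c i * f i := by
    simp_rw [mul_right_comm (c _) (c _) (f _), ← Finset.mul_sum, hc, mul_one]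
  rw [meanDist_sum_smul_left]
  simp_rw [meanDist_sum_smul_right]
  rw [← ENNReal.mul_le_mul_iff_right two_ne_zero ENNReal.ofNat_ne_top]
  calc 2 * ∑ i, c i * D i i = ∑ i, ∑ j, c i * c j * (D i i + D j j) := by
        simp_rw [mul_add, Finset.sum_add_distrib, hcollapse]
        rw [Finset.sum_comm]
        simp_rw [mul_comm (c _) (c _), hcollapse]
        ring
    _ ≤ ∑ i, ∑ j, c i * c j * (2 * D i j) := by
        gcongr with i _ j _
        exact meanDist_add_meanDist_le (μ i) (μ j)
    _ = 2 * ∑ i, c i * ∑ j, c j * D i j := by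
        simp_rw [Finset.mul_sum]
        congr! 2 with i _ j _
        ring

end InnerProductSpace

/-- **Nonnegativity of the Gini distance covariance and range of the Gini distance
correlation.** For Borel probability measures `ν₁, …, ν_K` on `ℝ^q` with finite first
moments, weights `pₖ > 0` summing to `1`, mixture `ν = ∑ₖ pₖ νₖ`,
`Δ = ∫∫ ‖x - y‖ dν dν` and `Δₖ = ∫∫ ‖x - y‖ dνₖ dνₖ`, one has
`gCov = Δ - ∑ₖ pₖ Δₖ ≥ 0`, and `ρ = gCov/Δ ∈ [0,1]` whenever `Δ > 0`. -/
theorem gcov_nonneg_corr_range (q K : ℕ)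
    (ν : Fin K → Measure (EuclideanSpace ℝ (Fin q))) [∀ k, IsProbabilityMeasure (ν k)]
    (hmom : ∀ k, Integrable (fun x : EuclideanSpace ℝ (Fin q) => ‖x‖) (ν k))
    (p : Fin K → ℝ) (hp : ∀ k, 0 < p k) (hsum : ∑ k : Fin K, p k = 1)
    (Δ : ℝ) (Δk : Fin K → ℝ)
    (hΔ : Δ = ∫ x, ∫ y, ‖x - y‖
      ∂(∑ k : Fin K, ENNReal.ofReal (p k) • ν k)
      ∂(∑ k : Fin K, ENNReal.ofReal (p k) • ν k))
    (hΔk : ∀ k, Δk k = ∫ x, ∫ y, ‖x - y‖ ∂(ν k) ∂(ν k)) :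
    0 ≤ Δ - ∑ k : Fin K, p k * Δk k ∧
      (0 < Δ → (Δ - ∑ k : Fin K, p k * Δk k) / Δ ∈ Set.Icc (0 : ℝ) 1) := by
  set c : Fin K → ℝ≥0∞ := fun k => ENNReal.ofReal (p k)
  have hc : ∑ k, c k = 1 := by
    rw [← ENNReal.ofReal_sum_of_nonneg fun k _ => (hp k).le, hsum, ENNReal.ofReal_one]
  have := isProbabilityMeasure_sum_smul ν c hc
  have hmom_mix : Integrable (‖·‖) (∑ k, c k • ν k) :=
    integrable_finsetSum_measure.2 fun k _ => (hmom k).smul_measure ENNReal.ofReal_ne_top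
  have hΔ_eq : Δ = (meanDist (∑ k, c k • ν k) (∑ k, c k • ν k)).toReal := by
    rw [hΔ, integral_integral_norm_sub hmom_mix hmom_mix]
  have hsum_eq : ∑ k, p k * Δk k = (∑ k, c k * meanDist (ν k) (ν k)).toReal := by
    rw [ENNReal.toReal_sum fun k _ => ENNReal.mul_ne_top ENNReal.ofReal_ne_top
      (meanDist_ne_top (hmom k) (hmom k))]
    congr! with k
    rw [hΔk, integral_integral_norm_sub (hmom k) (hmom k), ENNReal.toReal_mul,
      ENNReal.toReal_ofReal (hp k).le]
  have hle : ∑ k, p k * Δk k ≤ Δ := by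
    rw [hsum_eq, hΔ_eq]
    exact ENNReal.toReal_mono (meanDist_ne_top hmom_mix hmom_mix) (sum_mul_meanDist_self_le ν c hc)
  have hnonneg : 0 ≤ ∑ k, p k * Δk k := hsum_eq ▸ ENNReal.toReal_nonneg
  refine ⟨sub_nonneg.2 hle, fun hΔpos => ⟨div_nonneg (sub_nonneg.2 hle) hΔpos.le, ?_⟩⟩
  rw [div_le_one hΔpos]
  linarith
end
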